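/- Let n ≥ 2 and let {A(t)}_{t≥0} be a sequence of column-stochastic n×n matrices, each of out-degree form, that is strongly aperiodic and has the directed infinite flow property. Then for every s ≥ 0 there exist vectors φ(t) ∈ ℝⁿ (for t ≥ s) such that for all i, j ∈ [n] and all t ≥ s, |[A(t:s)]_{ij} − φ_i(t)| ≤ Λ_{t,s}, where Λ_{t,s} = ∏_{q∈Q_{t,s}} (1 − 1/n^{ℓ_q}). -/
import Mathlib


open Finset MeasureTheory

/-- `A_{S S̄} = ∑_{i ∈ S, j ∉ S} A i j`. -/
def flowSum {n : ℕ} (A : Matrix (Fin n) (Fin n) ℝ) (S : Finset (Fin n)) : ℝ :=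
  ∑ i ∈ S, ∑ j ∈ Sᶜ, A i j

/-- `S` is a nontrivial subset of `[n]`. -/
def NontrivialSubset {n : ℕ} (S : Finset (Fin n)) : Prop :=
  S.Nonempty ∧ S ≠ Finset.univ

/-- Directed infinite flow property: for every nontrivial `S`, `∑_t A_{S S̄}(t) = ∞`. -/
def DirectedInfiniteFlow {n : ℕ} (A : ℕ → Matrix (Fin n) (Fin n) ℝ) : Prop :=
  ∀ S : Finset (Fin n), NontrivialSubset S →
    Filter.Tendsto (fun T => ∑ t ∈ Finset.range T, flowSum (A t) S)
      Filter.atTop Filter.atTop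

/-- The backward product `A(t:s) = A(t) A(t-1) ⋯ A(s)`. -/
def matProd {n : ℕ} (A : ℕ → Matrix (Fin n) (Fin n) ℝ) (t s : ℕ) :
    Matrix (Fin n) (Fin n) ℝ :=
  (((List.range (t + 1 - s)).map fun k => A (t - k))).prod

/-- Row-stochastic nonnegative matrix. -/
def RowStochastic {n : ℕ} (A : Matrix (Fin n) (Fin n) ℝ) : Prop :=
  (∀ i j, 0 ≤ A i j) ∧ ∀ i, ∑ j, A i j = 1

/-- Column-stochastic nonnegative matrix. -/
def ColStochastic {n : ℕ} (A : Matrix (Fin n) (Fin n) ℝ) : Prop :=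
  (∀ i j, 0 ≤ A i j) ∧ ∀ j, ∑ i, A i j = 1

/-- `W` is the degree-normalized adjacency matrix of a digraph with all self-loops:
`W i j = 1 / (out-degree of j)` if there is an edge from `j` to `i`, else `0`. -/
def OutDegreeForm {n : ℕ} (W : Matrix (Fin n) (Fin n) ℝ) : Prop :=
  ∃ N : Fin n → Finset (Fin n), (∀ j, j ∈ N j) ∧
    ∀ i j, W i j = if i ∈ N j then (1 : ℝ) / (N j).card else 0

/-- Strong aperiodicity of a sequence of matrices. -/
def StronglyAperiodic {n : ℕ} (A : ℕ → Matrix (Fin n) (Fin n) ℝ) : Prop :=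
  ∃ γ : ℝ, 0 < γ ∧ ∀ t i, γ ≤ A t i i

/-- The times `k_q`: `k_0 = 0` and `k_q` is the least `t' > k_{q-1}` with
nonzero flow `∑_{t=k_{q-1}}^{t'-1} A_{S S̄}(t) > 0` across every nontrivial cut. -/
noncomputable def kSeq {n : ℕ} (A : ℕ → Matrix (Fin n) (Fin n) ℝ) : ℕ → ℕ
  | 0 => 0
  | q + 1 => sInf {t' : ℕ | kSeq A q < t' ∧ ∀ S : Finset (Fin n), NontrivialSubset S →
      0 < ∑ t ∈ Finset.Ico (kSeq A q) t', flowSum (A t) S}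

/-- `ℓ_q = k_{qn} - k_{(q-1)n}`. -/
noncomputable def ellSeq {n : ℕ} (A : ℕ → Matrix (Fin n) (Fin n) ℝ) (q : ℕ) : ℕ :=
  kSeq A (q * n) - kSeq A ((q - 1) * n)

/-- The index set `Q_{t,s} = {q ≥ 1 : s ≤ k_{(q-1)n}, k_{qn} ≤ t}` (as a `Finset`). -/
noncomputable def QSet {n : ℕ} (A : ℕ → Matrix (Fin n) (Fin n) ℝ) (t s : ℕ) :
    Finset ℕ :=
  (Finset.Icc 1 t).filter fun q => s ≤ kSeq A ((q - 1) * n) ∧ kSeq A (q * n) ≤ t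

/-- `Λ_{t,s} = ∏_{q ∈ Q_{t,s}} (1 - 1/n^{ℓ_q})`. -/
noncomputable def Lam {n : ℕ} (A : ℕ → Matrix (Fin n) (Fin n) ℝ) (t s : ℕ) : ℝ :=
  ∏ q ∈ QSet A t s, (1 - 1 / (n : ℝ) ^ (ellSeq A q))

/-- Push-sum iterates: `u(0) = u0`, `u(t+1) = W(t) u(t)`. -/
def pushIter {n : ℕ} (W : ℕ → Matrix (Fin n) (Fin n) ℝ) (u0 : Fin n → ℝ) : ℕ → Fin n → ℝ
  | 0 => u0
  | t + 1 => (W t).mulVec (pushIter W u0 t)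

/-- A nonnegative matrix is irreducible if the digraph with an edge from `j` to `i`
whenever `A i j > 0` is strongly connected. -/
def IrreducibleMat {n : ℕ} (A : Matrix (Fin n) (Fin n) ℝ) : Prop :=
  ∀ i j : Fin n, Relation.ReflTransGen (fun a b => 0 < A b a) i j


section Aux
variable {n : ℕ}

/-- forward product over `[s, r)`, newest on the left. -/
noncomputable def seg (A : ℕ → Matrix (Fin n) (Fin n) ℝ) (s r : ℕ) :
    Matrix (Fin n) (Fin n) ℝ :=
  ((List.range (r - s)).map fun k => A (r - 1 - k)).prod

variable {A : ℕ → Matrix (Fin n) (Fin n) ℝ}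

lemma seg_self (A : ℕ → Matrix (Fin n) (Fin n) ℝ) (s : ℕ) : seg A s s = 1 := by
  simp [seg]

lemma seg_succ {s r : ℕ} (h : s ≤ r) : seg A s (r + 1) = A r * seg A s r := by
  have h1 : r + 1 - s = (r - s) + 1 := by omega
  rw [seg, h1, List.range_succ_eq_map, List.map_cons, List.prod_cons, List.map_map]
  have h2 : ((fun k => A (r + 1 - 1 - k)) ∘ Nat.succ) = fun k => A (r - 1 - k) := by
    funext k
    show A (r + 1 - 1 - (k + 1)) = A (r - 1 - k)
    have hk : r + 1 - 1 - (k + 1) = r - 1 - k := by omega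
    rw [hk]
  have h3 : r + 1 - 1 - 0 = r := by omega
  rw [h2, h3]; rfl

lemma matProd_eq_seg (t s : ℕ) : matProd A t s = seg A s (t + 1) := by
  have : ∀ k, t + 1 - 1 - k = t - k := fun k => by omega
  simp [matProd, seg, this]

lemma seg_comp {s m r : ℕ} (h1 : s ≤ m) (h2 : m ≤ r) :
    seg A s r = seg A m r * seg A s m := by
  induction r, h2 using Nat.le_induction with
  | base => rw [seg_self, one_mul]
  | succ r hmr ih =>
      rw [seg_succ (h1.trans hmr), ih, seg_succ hmr, mul_assoc]

lemma ColStochastic.mul {B C : Matrix (Fin n) (Fin n) ℝ}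
    (hB : ColStochastic B) (hC : ColStochastic C) : ColStochastic (B * C) := by
  constructor
  · intro i j
    rw [Matrix.mul_apply]
    exact Finset.sum_nonneg fun k _ => mul_nonneg (hB.1 i k) (hC.1 k j)
  · intro j
    simp only [Matrix.mul_apply]
    rw [Finset.sum_comm]
    have : ∀ k, ∑ i, B i k * C k j = C k j := by
      intro k; rw [← Finset.sum_mul, hB.2, one_mul]
    simp only [this, hC.2]

lemma colStochastic_one : ColStochastic (1 : Matrix (Fin n) (Fin n) ℝ) := by
  constructor
  · intro i j; rw [Matrix.one_apply]; split <;> norm_num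
  · intro j; simp [Matrix.one_apply]

lemma seg_cs (hCS : ∀ t, ColStochastic (A t)) {s r : ℕ} (h : s ≤ r) :
    ColStochastic (seg A s r) := by
  induction r, h using Nat.le_induction with
  | base => rw [seg_self]; exact colStochastic_one
  | succ r hr ih => rw [seg_succ hr]; exact (hCS r).mul ih

lemma sum_mulVec {B : Matrix (Fin n) (Fin n) ℝ} (hB : ColStochastic B)
    (x : Fin n → ℝ) : ∑ i, B.mulVec x i = ∑ j, x j := by
  simp only [Matrix.mulVec, dotProduct]
  rw [Finset.sum_comm]
  have : ∀ j, ∑ i, B i j * x j = x j := by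
    intro j; rw [← Finset.sum_mul, hB.2, one_mul]
  simp only [this]

lemma l1_nonexpand {B : Matrix (Fin n) (Fin n) ℝ} (hB : ColStochastic B)
    (x : Fin n → ℝ) : ∑ i, |B.mulVec x i| ≤ ∑ j, |x j| := by
  have step : ∀ i, |B.mulVec x i| ≤ ∑ j, B i j * |x j| := by
    intro i
    simp only [Matrix.mulVec, dotProduct]
    refine (Finset.abs_sum_le_sum_abs _ _).trans (le_of_eq ?_)
    refine Finset.sum_congr rfl fun j _ => ?_
    rw [abs_mul, abs_of_nonneg (hB.1 i j)]
  calc ∑ i, |B.mulVec x i| ≤ ∑ i, ∑ j, B i j * |x j| :=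
        Finset.sum_le_sum fun i _ => step i
    _ = ∑ j, (∑ i, B i j) * |x j| := by
        rw [Finset.sum_comm]
        exact Finset.sum_congr rfl fun j _ => (Finset.sum_mul _ _ _).symm
    _ = ∑ j, |x j| := by simp [hB.2]

lemma seg_nonexpand (hCS : ∀ t, ColStochastic (A t)) {s r : ℕ} (h : s ≤ r)
    (x : Fin n → ℝ) : ∑ i, |(seg A s r).mulVec x i| ≤ ∑ j, |x j| := by
  induction r, h using Nat.le_induction with
  | base => rw [seg_self]; simp [Matrix.one_mulVec]
  | succ r hr ih =>
      rw [seg_succ hr, ← Matrix.mulVec_mulVec]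
      exact (l1_nonexpand (hCS r) _).trans ih

lemma l1_contract {B : Matrix (Fin n) (Fin n) ℝ} (hB : ColStochastic B)
    {δ : ℝ} (hδ : 0 ≤ δ) (hBδ : ∀ i j, δ ≤ B i j)
    (x : Fin n → ℝ) (hx : ∑ j, x j = 0) :
    ∑ i, |B.mulVec x i| ≤ (1 - n * δ) * ∑ j, |x j| := by
  have key : ∀ i, B.mulVec x i = ∑ j, (B i j - δ) * x j := by
    intro i
    simp only [Matrix.mulVec, dotProduct, sub_mul, Finset.sum_sub_distrib,
      ← Finset.mul_sum, hx, mul_zero, sub_zero]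
  have step : ∀ i, |B.mulVec x i| ≤ ∑ j, (B i j - δ) * |x j| := by
    intro i
    rw [key i]
    refine (Finset.abs_sum_le_sum_abs _ _).trans (le_of_eq ?_)
    refine Finset.sum_congr rfl fun j _ => ?_
    rw [abs_mul, abs_of_nonneg (sub_nonneg.2 (hBδ i j))]
  calc ∑ i, |B.mulVec x i| ≤ ∑ i, ∑ j, (B i j - δ) * |x j| :=
        Finset.sum_le_sum fun i _ => step i
    _ = ∑ j, (∑ i, (B i j - δ)) * |x j| := by
        rw [Finset.sum_comm]
        exact Finset.sum_congr rfl fun j _ => (Finset.sum_mul _ _ _).symm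
    _ = ∑ j, (1 - n * δ) * |x j| := by
        refine Finset.sum_congr rfl fun j _ => ?_
        congr 1
        rw [Finset.sum_sub_distrib, hB.2]
        simp [Finset.card_univ, mul_comm]
    _ = (1 - n * δ) * ∑ j, |x j| := by rw [Finset.mul_sum]

lemma abs_le_half_sum {v : Fin n → ℝ} (hv : ∑ j, v j = 0) (i : Fin n) :
    |v i| ≤ (∑ j, |v j|) / 2 := by
  have h1 : v i ≤ (∑ j, |v j|) / 2 := by
    have e : ∑ j, (|v j| + v j) / 2 = (∑ j, |v j|) / 2 := by
      rw [show (∑ j, (|v j| + v j) / 2) = (∑ j, (|v j| + v j)) / 2 from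
        (Finset.sum_div _ _ _).symm, Finset.sum_add_distrib, hv, add_zero]
    calc v i ≤ (|v i| + v i) / 2 := by
          have := le_abs_self (v i); linarith
      _ ≤ ∑ j, (|v j| + v j) / 2 := by
          refine Finset.single_le_sum (f := fun j => (|v j| + v j) / 2) (fun j _ => ?_) (Finset.mem_univ i)
          have := neg_abs_le (v j); linarith
      _ = (∑ j, |v j|) / 2 := e
  have h2 : -v i ≤ (∑ j, |v j|) / 2 := by
    have e : ∑ j, (|v j| - v j) / 2 = (∑ j, |v j|) / 2 := by
      rw [show (∑ j, (|v j| - v j) / 2) = (∑ j, (|v j| - v j)) / 2 from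
        (Finset.sum_div _ _ _).symm, Finset.sum_sub_distrib, hv, sub_zero]
    calc -v i ≤ (|v i| - v i) / 2 := by
          have := neg_abs_le (v i); linarith
      _ ≤ ∑ j, (|v j| - v j) / 2 := by
          refine Finset.single_le_sum (f := fun j => (|v j| - v j) / 2) (fun j _ => ?_) (Finset.mem_univ i)
          have := le_abs_self (v j); linarith
      _ = (∑ j, |v j|) / 2 := e
  exact abs_le.2 ⟨by linarith, h1⟩

/-! ### kSeq facts -/

lemma flowSum_nonneg {M : Matrix (Fin n) (Fin n) ℝ} (hM : ∀ i j, 0 ≤ M i j)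
    (S : Finset (Fin n)) : 0 ≤ flowSum M S :=
  Finset.sum_nonneg fun i _ => Finset.sum_nonneg fun j _ => hM i j

lemma kSet_nonempty (hflow : DirectedInfiniteFlow A) (K : ℕ) :
    {t' : ℕ | K < t' ∧ ∀ S : Finset (Fin n), NontrivialSubset S →
      0 < ∑ t ∈ Finset.Ico K t', flowSum (A t) S}.Nonempty := by
  have hev : ∀ᶠ T in Filter.atTop, (K < T ∧
      ∀ S : {S : Finset (Fin n) // NontrivialSubset S},
        ∑ t ∈ Finset.range K, flowSum (A t) S.1 <
          ∑ t ∈ Finset.range T, flowSum (A t) S.1) := by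
    refine (Filter.eventually_gt_atTop K).and ?_
    rw [Filter.eventually_all]
    intro S
    exact (hflow S.1 S.2).eventually_gt_atTop _
  obtain ⟨T, hT1, hT2⟩ := hev.exists
  refine ⟨T, hT1, fun S hS => ?_⟩
  have h := hT2 ⟨S, hS⟩
  rw [Finset.sum_Ico_eq_sub _ hT1.le]
  linarith

lemma kSeq_succ_mem (hflow : DirectedInfiniteFlow A) (q : ℕ) :
    kSeq A q < kSeq A (q + 1) ∧ ∀ S : Finset (Fin n), NontrivialSubset S →
      0 < ∑ t ∈ Finset.Ico (kSeq A q) (kSeq A (q + 1)), flowSum (A t) S := by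
  have : kSeq A (q + 1) = sInf {t' : ℕ | kSeq A q < t' ∧
      ∀ S : Finset (Fin n), NontrivialSubset S →
        0 < ∑ t ∈ Finset.Ico (kSeq A q) t', flowSum (A t) S} := by
    rw [kSeq]
  rw [this]
  exact Nat.sInf_mem (kSet_nonempty hflow _)

lemma kSeq_strictMono (hflow : DirectedInfiniteFlow A) : StrictMono (kSeq A) :=
  strictMono_nat_of_lt_succ fun q => (kSeq_succ_mem hflow q).1

lemma kSeq_ge (hflow : DirectedInfiniteFlow A) (q : ℕ) : q ≤ kSeq A q := by
  induction q with
  | zero => exact Nat.zero_le _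
  | succ q ih => exact Nat.lt_of_le_of_lt ih (kSeq_strictMono hflow (Nat.lt_succ_self q))

/-! ### out-degree facts -/

lemma od_entry {W : Matrix (Fin n) (Fin n) ℝ} (hOD : OutDegreeForm W) (i j : Fin n) :
    W i j = 0 ∨ 1 / (n : ℝ) ≤ W i j := by
  obtain ⟨N, hself, hW⟩ := hOD
  rw [hW]
  split_ifs with h
  · right
    have hpos : (0 : ℝ) < (N j).card := by
      have := Finset.card_pos.2 ⟨j, hself j⟩
      exact_mod_cast this
    have hle : ((N j).card : ℝ) ≤ n := by
      have : (N j).card ≤ n := by simpa using Finset.card_le_univ (N j)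
      exact_mod_cast this
    exact one_div_le_one_div_of_le hpos hle
  · left; rfl

lemma od_diag_pos {W : Matrix (Fin n) (Fin n) ℝ} (hOD : OutDegreeForm W) (i : Fin n) :
    0 < W i i := by
  obtain ⟨N, hself, hW⟩ := hOD
  rw [hW, if_pos (hself i)]
  have hpos : (0 : ℝ) < (N i).card := by
    have := Finset.card_pos.2 ⟨i, hself i⟩
    exact_mod_cast this
  positivity

variable (hCS : ∀ t, ColStochastic (A t)) (hOD : ∀ t, OutDegreeForm (A t))

include hCS in
lemma seg_nonneg {s r : ℕ} (h : s ≤ r) (i j : Fin n) : 0 ≤ seg A s r i j :=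
  (seg_cs hCS h).1 i j

include hCS hOD in
lemma seg_entry_lb' {s r : ℕ} (h : s ≤ r) :
    ∀ i j, seg A s r i j = 0 ∨ (1 / (n : ℝ)) ^ (r - s) ≤ seg A s r i j := by
  induction r, h using Nat.le_induction with
  | base =>
      intro i j
      rw [seg_self]
      rcases eq_or_ne i j with rfl | hne
      · right; simp [Matrix.one_apply]
      · left; simp [Matrix.one_apply, hne]
  | succ r hr ih =>
      intro i j
      rw [seg_succ hr]
      by_cases hz : (A r * seg A s r) i j = 0
      · exact Or.inl hz
      right
      have hterm : ∀ k, 0 ≤ A r i k * seg A s r k j :=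
        fun k => mul_nonneg ((hCS r).1 i k) (seg_nonneg hCS hr k j)
      have hex : ∃ k, 0 < A r i k * seg A s r k j := by
        by_contra hcon
        push_neg at hcon
        apply hz
        rw [Matrix.mul_apply]
        exact le_antisymm (Finset.sum_nonpos fun k _ => hcon k)
          (Finset.sum_nonneg fun k _ => hterm k)
      obtain ⟨k, hk⟩ := hex
      have hA : 1 / (n : ℝ) ≤ A r i k := by
        rcases od_entry (hOD r) i k with h0 | h1
        · exfalso; rw [h0, zero_mul] at hk; exact lt_irrefl _ hk
        · exact h1
      have hseg : (1 / (n : ℝ)) ^ (r - s) ≤ seg A s r k j := by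
        rcases ih k j with h0 | h1
        · exfalso; rw [h0, mul_zero] at hk; exact lt_irrefl _ hk
        · exact h1
      have hrs : r + 1 - s = (r - s) + 1 := by omega
      rw [Matrix.mul_apply, hrs, pow_succ]
      calc (1 / (n : ℝ)) ^ (r - s) * (1 / n) ≤ seg A s r k j * A r i k := by
            apply mul_le_mul hseg hA (by positivity)
              (le_trans (by positivity) hseg)
        _ = A r i k * seg A s r k j := mul_comm _ _
        _ ≤ ∑ m, A r i m * seg A s r m j :=
            Finset.single_le_sum (fun m _ => hterm m) (Finset.mem_univ k)

/-! ### block positivity -/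

lemma exists_pos_of_sum_pos {α : Type*} {s : Finset α} {f : α → ℝ}
    (h : 0 < ∑ x ∈ s, f x) : ∃ x ∈ s, 0 < f x := by
  by_contra hcon
  push_neg at hcon
  exact absurd (Finset.sum_nonpos hcon) (not_le.2 h)

variable (hflow : DirectedInfiniteFlow A)

include hCS hOD hflow in
open scoped Classical in
lemma block_pos (p : ℕ) (i j : Fin n) :
    0 < seg A (kSeq A p) (kSeq A (p + n)) i j := by
  set b := kSeq A p with hb
  have hbmono : ∀ m, p ≤ m → b ≤ kSeq A m := fun m hm =>
    (kSeq_strictMono hflow).monotone hm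
  set Su : ℕ → Finset (Fin n) :=
    fun r => Finset.univ.filter (fun i => 0 < seg A b r i j) with hSu
  have hmemSu : ∀ r i, i ∈ Su r ↔ 0 < seg A b r i j := by
    intro r i; simp [hSu]
  have hmono : ∀ r, b ≤ r → Su r ⊆ Su (r + 1) := by
    intro r hr i hi
    rw [hmemSu] at hi ⊢
    rw [seg_succ hr, Matrix.mul_apply]
    have hterm : ∀ k, 0 ≤ A r i k * seg A b r k j :=
      fun k => mul_nonneg ((hCS r).1 i k) (seg_nonneg hCS hr k j)
    calc (0:ℝ) < A r i i * seg A b r i j :=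
          mul_pos (od_diag_pos (hOD r) i) hi
      _ ≤ ∑ m, A r i m * seg A b r m j :=
          Finset.single_le_sum (fun m _ => hterm m) (Finset.mem_univ i)
  have hmono' : ∀ r₁ r₂, b ≤ r₁ → r₁ ≤ r₂ → Su r₁ ⊆ Su r₂ := by
    intro r₁ r₂ h1 h2
    induction r₂, h2 using Nat.le_induction with
    | base => exact subset_rfl
    | succ r hr ih => exact ih.trans (hmono r (h1.trans hr))
  have hedge : ∀ r, b ≤ r → ∀ k i', k ∈ Su r → 0 < A r i' k → i' ∈ Su (r + 1) := by
    intro r hr k i' hk hA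
    rw [hmemSu] at hk ⊢
    rw [seg_succ hr, Matrix.mul_apply]
    have hterm : ∀ m, 0 ≤ A r i' m * seg A b r m j :=
      fun m => mul_nonneg ((hCS r).1 i' m) (seg_nonneg hCS hr m j)
    calc (0:ℝ) < A r i' k * seg A b r k j := mul_pos hA hk
      _ ≤ ∑ m, A r i' m * seg A b r m j :=
          Finset.single_le_sum (fun m _ => hterm m) (Finset.mem_univ k)
  have hj : ∀ r, b ≤ r → j ∈ Su r := by
    intro r hr
    refine hmono' b r le_rfl hr ?_
    rw [hmemSu, seg_self]
    simp [Matrix.one_apply]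
  have hgrow : ∀ m, p ≤ m →
      Su (kSeq A (m + 1)) = Finset.univ ∨ Su (kSeq A m) ⊂ Su (kSeq A (m + 1)) := by
    intro m hpm
    by_cases hU : Su (kSeq A (m + 1)) = Finset.univ
    · exact Or.inl hU
    right
    have hsub : Su (kSeq A m) ⊆ Su (kSeq A (m + 1)) :=
      hmono' _ _ (hbmono m hpm) ((kSeq_strictMono hflow).monotone (Nat.le_succ m))
    refine Finset.ssubset_iff_subset_ne.2 ⟨hsub, fun heq => ?_⟩
    set T := Su (kSeq A (m + 1)) with hT
    have hjT : j ∈ T := hj _ (hbmono (m + 1) (hpm.trans (Nat.le_succ m)))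
    have hNT : NontrivialSubset Tᶜ := by
      constructor
      · obtain ⟨x, hx⟩ : ∃ x, x ∉ T := by
          by_contra hc
          push_neg at hc
          exact hU (Finset.eq_univ_iff_forall.2 hc)
        exact ⟨x, Finset.mem_compl.2 hx⟩
      · intro hcu
        have := Finset.mem_compl.1 (hcu ▸ Finset.mem_univ j)
        exact this hjT
    have hfl := (kSeq_succ_mem hflow m).2 Tᶜ hNT
    obtain ⟨t, htmem, htpos⟩ := exists_pos_of_sum_pos hfl
    rw [Finset.mem_Ico] at htmem
    obtain ⟨i', hi'mem, hi'pos⟩ := exists_pos_of_sum_pos htpos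
    obtain ⟨k, hkmem, hkpos⟩ := exists_pos_of_sum_pos hi'pos
    rw [compl_compl] at hkmem
    -- k ∈ T = Su (kSeq A m) ⊆ Su t
    have hkt : k ∈ Su t := by
      have hk2 : k ∈ Su (kSeq A m) := by rw [heq]; exact hkmem
      exact hmono' _ _ (hbmono m hpm) htmem.1 hk2
    have hbt : b ≤ t := (hbmono m hpm).trans htmem.1
    have hi'succ : i' ∈ Su (t + 1) := hedge t hbt k i' hkt hkpos
    have hi'T : i' ∈ T :=
      hmono' _ _ (hbt.trans (Nat.le_succ t)) htmem.2 hi'succ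
    exact (Finset.mem_compl.1 hi'mem) hi'T
  have hcard : ∀ r, r ≤ n →
      Su (kSeq A (p + r)) = Finset.univ ∨ 1 + r ≤ (Su (kSeq A (p + r))).card := by
    intro r hr
    induction r with
    | zero =>
        right
        have : j ∈ Su (kSeq A p) := hj _ (hbmono p le_rfl)
        simpa using Finset.card_pos.2 ⟨j, this⟩
    | succ r ih =>
        have hr' : r ≤ n := Nat.le_of_succ_le hr
        rcases ih hr' with hU | hc
        · left
          have hsub : Su (kSeq A (p + r)) ⊆ Su (kSeq A (p + r + 1)) :=
            hmono' _ _ (hbmono _ (Nat.le_add_right p r))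
              ((kSeq_strictMono hflow).monotone (Nat.le_succ _))
          rw [hU] at hsub
          rw [show p + (r+1) = p + r + 1 from rfl]
          exact Finset.univ_subset_iff.1 hsub
        · rcases hgrow (p + r) (Nat.le_add_right p r) with hU | hss
          · left; rw [show p + (r+1) = p + r + 1 from rfl]; exact hU
          · right
            rw [show p + (r+1) = p + r + 1 from rfl]
            have := Finset.card_lt_card hss
            omega
  have hfin : Su (kSeq A (p + n)) = Finset.univ := by
    rcases hcard n le_rfl with hU | hc
    · exact hU
    · exfalso
      have : (Su (kSeq A (p + n))).card ≤ n := by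
        simpa using Finset.card_le_univ (Su (kSeq A (p + n)))
      omega
  have : i ∈ Su (kSeq A (p + n)) := hfin ▸ Finset.mem_univ i
  exact (hmemSu _ i).1 this

include hCS hOD hflow in
lemma block_lb {q : ℕ} (hq : 1 ≤ q) (i j : Fin n) :
    (1 / (n : ℝ)) ^ (ellSeq A q) ≤ seg A (kSeq A ((q - 1) * n)) (kSeq A (q * n)) i j := by
  obtain ⟨q', rfl⟩ : ∃ q', q = q' + 1 := ⟨q - 1, by omega⟩
  have h1 : (q' + 1 - 1) * n = q' * n := by simp
  have h2 : q' * n + n = (q' + 1) * n := by ring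
  have hpos := block_pos hCS hOD hflow (q' * n) i j
  rw [h2] at hpos
  have hle : kSeq A ((q' + 1 - 1) * n) ≤ kSeq A ((q' + 1) * n) := by
    apply (kSeq_strictMono hflow).monotone
    rw [h1]
    exact Nat.mul_le_mul_right n (by omega)
  rcases seg_entry_lb' hCS hOD hle i j with h0 | hlb
  · exfalso
    rw [h1] at h0
    rw [h0] at hpos
    exact lt_irrefl _ hpos
  · rw [ellSeq]
    exact hlb

lemma factor_nonneg (hn : 1 ≤ n) (q : ℕ) :
    0 ≤ 1 - 1 / (n : ℝ) ^ (ellSeq A q) := by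
  have h1 : (1 : ℝ) ≤ (n : ℝ) ^ (ellSeq A q) :=
    one_le_pow₀ (by exact_mod_cast hn)
  have := div_le_one_of_le₀ h1 (by positivity)
  linarith

lemma factor_le_one (hn : 1 ≤ n) (q : ℕ) :
    1 - 1 / (n : ℝ) ^ (ellSeq A q) ≤ 1 := by
  have h1 : (0 : ℝ) < (n : ℝ) ^ (ellSeq A q) := by
    have : (0:ℝ) < (n:ℝ) := by exact_mod_cast hn.trans_lt' Nat.zero_lt_one
    positivity
  have : 0 < 1 / (n : ℝ) ^ (ellSeq A q) := by positivity
  linarith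

lemma prod_anti {f : ℕ → ℝ} {S T : Finset ℕ} (hST : S ⊆ T)
    (h0 : ∀ q ∈ T, 0 ≤ f q) (h1 : ∀ q ∈ T, f q ≤ 1) :
    ∏ q ∈ T, f q ≤ ∏ q ∈ S, f q := by
  rw [← Finset.prod_sdiff hST]
  refine mul_le_of_le_one_left (Finset.prod_nonneg fun q hq => h0 q (hST hq)) ?_
  exact Finset.prod_le_one (fun q hq => h0 q (Finset.mem_sdiff.1 hq).1)
    (fun q hq => h1 q (Finset.mem_sdiff.1 hq).1)

/-- auxiliary index set with inclusive upper bound `m` (for products `seg A s m`). -/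
noncomputable def Qaux (A : ℕ → Matrix (Fin n) (Fin n) ℝ) (s m : ℕ) : Finset ℕ :=
  (Finset.Icc 1 m).filter fun q => s ≤ kSeq A ((q - 1) * n) ∧ kSeq A (q * n) ≤ m

include hCS hOD hflow in
lemma key_bound (hn : 2 ≤ n) (s : ℕ) (x : Fin n → ℝ) (hx : ∑ j, x j = 0) :
    ∀ m, s ≤ m → ∑ i, |(seg A s m).mulVec x i| ≤
      (∏ q ∈ Qaux A s m, (1 - 1 / (n : ℝ) ^ (ellSeq A q))) * ∑ j, |x j| := by
  intro m
  induction m using Nat.strong_induction_on with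
  | _ m ih =>
  intro hsm
  by_cases hQ : Qaux A s m = ∅
  · rw [hQ]
    simpa using seg_nonexpand hCS hsm x
  have hne : (Qaux A s m).Nonempty := Finset.nonempty_iff_ne_empty.2 hQ
  set qm := (Qaux A s m).max' hne with hqm
  have hqmem : qm ∈ Qaux A s m := Finset.max'_mem _ hne
  have hqmem' := hqmem
  rw [Qaux, Finset.mem_filter, Finset.mem_Icc] at hqmem'
  obtain ⟨⟨h1q, hqmle⟩, hsb, hem⟩ := hqmem'
  set b := kSeq A ((qm - 1) * n) with hbdef
  set e := kSeq A (qm * n) with hedef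
  have hnpos : 0 < n := by omega
  have hbe : b < e := by
    apply kSeq_strictMono hflow
    exact (Nat.mul_lt_mul_right hnpos).2 (by omega)
  have hse : s ≤ e := hsb.trans hbe.le
  have hdec : (seg A s m).mulVec x =
      (seg A e m).mulVec ((seg A b e).mulVec ((seg A s b).mulVec x)) := by
    rw [Matrix.mulVec_mulVec, Matrix.mulVec_mulVec, mul_assoc,
      ← seg_comp hsb hbe.le, ← seg_comp hse hem]
  set z := (seg A s b).mulVec x with hzdef
  have hz0 : ∑ j, z j = 0 := by rw [hzdef, sum_mulVec (seg_cs hCS hsb), hx]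
  have hzabs : 0 ≤ ∑ i, |z i| := Finset.sum_nonneg fun i _ => abs_nonneg _
  have hxabs : 0 ≤ ∑ j, |x j| := Finset.sum_nonneg fun j _ => abs_nonneg _
  have hzle : ∑ i, |z i| ≤
      (∏ q ∈ Qaux A s b, (1 - 1 / (n : ℝ) ^ (ellSeq A q))) * ∑ j, |x j| :=
    ih b (lt_of_lt_of_le hbe hem) hsb
  set y := (seg A b e).mulVec z with hydef
  have hδpos : (0:ℝ) < (1 / (n : ℝ)) ^ (ellSeq A qm) := by
    have : (0:ℝ) < (n:ℝ) := by exact_mod_cast hnpos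
    positivity
  have hyle : ∑ i, |y i| ≤ (1 - 1 / (n : ℝ) ^ (ellSeq A qm)) * ∑ i, |z i| := by
    have hcon := l1_contract (seg_cs hCS hbe.le) hδpos.le
      (fun i j => block_lb hCS hOD hflow h1q i j) z hz0
    refine hcon.trans ?_
    apply mul_le_mul_of_nonneg_right _ hzabs
    have heq : (1 / (n : ℝ)) ^ (ellSeq A qm) = 1 / (n : ℝ) ^ (ellSeq A qm) :=
      one_div_pow _ _
    have h1n : (1:ℝ) ≤ (n:ℝ) := by exact_mod_cast hnpos
    have := le_mul_of_one_le_left hδpos.le h1n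
    rw [heq] at this ⊢
    linarith
  have hfinal : ∑ i, |(seg A s m).mulVec x i| ≤ ∑ i, |y i| := by
    rw [hdec]
    exact seg_nonexpand hCS hem y
  -- subset of index sets
  have hsubset : (Qaux A s m).erase qm ⊆ Qaux A s b := by
    intro q hq
    have hqne := Finset.ne_of_mem_erase hq
    have hqmem2 := Finset.mem_of_mem_erase hq
    have hqle : q ≤ qm := Finset.le_max' _ _ hqmem2
    have hqlt : q < qm := lt_of_le_of_ne hqle hqne
    rw [Qaux, Finset.mem_filter, Finset.mem_Icc] at hqmem2 ⊢
    obtain ⟨⟨h1q', _⟩, hsb', hqnm⟩ := hqmem2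
    have hmul : q * n ≤ (qm - 1) * n := Nat.mul_le_mul_right n (by omega)
    have hkq : kSeq A (q * n) ≤ b := (kSeq_strictMono hflow).monotone hmul
    refine ⟨⟨h1q', ?_⟩, hsb', hkq⟩
    calc q ≤ q * n := Nat.le_mul_of_pos_right q hnpos
      _ ≤ kSeq A (q * n) := kSeq_ge hflow _
      _ ≤ b := hkq
  have hprodle : (∏ q ∈ Qaux A s b, (1 - 1 / (n : ℝ) ^ (ellSeq A q))) ≤
      ∏ q ∈ (Qaux A s m).erase qm, (1 - 1 / (n : ℝ) ^ (ellSeq A q)) := by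
    refine prod_anti hsubset (fun q _ => factor_nonneg (by omega) q)
      (fun q _ => factor_le_one (by omega) q)
  have hfq : 0 ≤ 1 - 1 / (n : ℝ) ^ (ellSeq A qm) := factor_nonneg (by omega) qm
  calc ∑ i, |(seg A s m).mulVec x i| ≤ ∑ i, |y i| := hfinal
    _ ≤ (1 - 1 / (n : ℝ) ^ (ellSeq A qm)) * ∑ i, |z i| := hyle
    _ ≤ (1 - 1 / (n : ℝ) ^ (ellSeq A qm)) *
        ((∏ q ∈ Qaux A s b, (1 - 1 / (n : ℝ) ^ (ellSeq A q))) * ∑ j, |x j|) :=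
        mul_le_mul_of_nonneg_left hzle hfq
    _ ≤ (1 - 1 / (n : ℝ) ^ (ellSeq A qm)) *
        ((∏ q ∈ (Qaux A s m).erase qm, (1 - 1 / (n : ℝ) ^ (ellSeq A q))) * ∑ j, |x j|) := by
        apply mul_le_mul_of_nonneg_left _ hfq
        exact mul_le_mul_of_nonneg_right hprodle hxabs
    _ = (∏ q ∈ Qaux A s m, (1 - 1 / (n : ℝ) ^ (ellSeq A q))) * ∑ j, |x j| := by
        rw [← mul_assoc, Finset.mul_prod_erase (Qaux A s m) (fun q => 1 - 1 / (n:ℝ) ^ (ellSeq A q)) hqmem]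

end Aux

/-- For a strongly aperiodic sequence of column-stochastic matrices of
out-degree form having the directed infinite flow property, there are vectors `φ(t)`
with `|[A(t:s)]_{ij} - φ_i(t)| ≤ Λ_{t,s}`. -/
theorem product_contraction_column_stochastic {n : ℕ} (hn : 2 ≤ n)
    (A : ℕ → Matrix (Fin n) (Fin n) ℝ)
    (hCS : ∀ t, ColStochastic (A t))
    (hOD : ∀ t, OutDegreeForm (A t))
    (hAper : StronglyAperiodic A)
    (hflow : DirectedInfiniteFlow A) :
    ∀ s : ℕ, ∃ φ : ℕ → Fin n → ℝ, ∀ t, s ≤ t → ∀ i j,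
      |matProd A t s i j - φ t i| ≤ Lam A t s := by
  intro s
  have h0n : 0 < n := by omega
  set j0 : Fin n := ⟨0, h0n⟩ with hj0
  refine ⟨fun t i => matProd A t s i j0, ?_⟩
  intro t hts i j
  set x : Fin n → ℝ :=
    fun m => (if m = j then (1:ℝ) else 0) - (if m = j0 then 1 else 0) with hxdef
  have hx0 : ∑ m, x m = 0 := by
    simp [hxdef, Finset.sum_sub_distrib]
  have hst1 : s ≤ t + 1 := by omega
  have hkey := key_bound hCS hOD hflow hn s x hx0 (t + 1) hst1
  have hxabs : ∑ m, |x m| ≤ 2 := by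
    have hb : ∀ m, |x m| ≤ (if m = j then (1:ℝ) else 0) + (if m = j0 then 1 else 0) := by
      intro m
      rw [hxdef]
      dsimp only
      split_ifs <;> norm_num
    calc ∑ m, |x m| ≤
        ∑ m, ((if m = j then (1:ℝ) else 0) + (if m = j0 then 1 else 0)) :=
          Finset.sum_le_sum fun m _ => hb m
      _ ≤ 2 := by
          rw [Finset.sum_add_distrib]
          simp only [Finset.sum_ite_eq', Finset.mem_univ, if_pos]
          norm_num
  have hv : ∀ i', (seg A s (t + 1)).mulVec x i' =
      seg A s (t + 1) i' j - seg A s (t + 1) i' j0 := by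
    intro i'
    simp [Matrix.mulVec, dotProduct, hxdef, mul_sub, Finset.sum_sub_distrib,
      mul_ite, mul_one, mul_zero, Finset.sum_ite_eq']
  have hsum0 : ∑ i', (seg A s (t + 1)).mulVec x i' = 0 := by
    rw [sum_mulVec (seg_cs hCS hst1), hx0]
  have hPnn : 0 ≤ ∏ q ∈ Qaux A s (t + 1), (1 - 1 / (n : ℝ) ^ (ellSeq A q)) :=
    Finset.prod_nonneg fun q _ => factor_nonneg (by omega) q
  have habs : |matProd A t s i j - matProd A t s i j0| ≤
      ∏ q ∈ Qaux A s (t + 1), (1 - 1 / (n : ℝ) ^ (ellSeq A q)) := by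
    rw [matProd_eq_seg, ← hv i]
    have h1 := abs_le_half_sum hsum0 i
    have h2 : (∏ q ∈ Qaux A s (t + 1), (1 - 1 / (n : ℝ) ^ (ellSeq A q))) * (∑ m, |x m|) ≤
        (∏ q ∈ Qaux A s (t + 1), (1 - 1 / (n : ℝ) ^ (ellSeq A q))) * 2 :=
      mul_le_mul_of_nonneg_left hxabs hPnn
    linarith
  have hQsub : QSet A t s ⊆ Qaux A s (t + 1) := by
    intro q hq
    rw [QSet, Finset.mem_filter, Finset.mem_Icc] at hq
    rw [Qaux, Finset.mem_filter, Finset.mem_Icc]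
    exact ⟨⟨hq.1.1, by omega⟩, hq.2.1, hq.2.2.trans (by omega)⟩
  have hLam : (∏ q ∈ Qaux A s (t + 1), (1 - 1 / (n : ℝ) ^ (ellSeq A q))) ≤ Lam A t s := by
    rw [Lam]
    exact prod_anti hQsub (fun q _ => factor_nonneg (by omega) q)
      (fun q _ => factor_le_one (by omega) q)
  exact habs.trans hLam
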